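/- Let V be a reflexive Banach space and M : V → V* pseudo-monotone in the sense of Brézis and bounded on bounded sets. Then M is pseudo-monotone in the sense of Browder: if v_n ⇀ v weakly in V and limsup_n ⟨M(v_n), v_n - v⟩ ≤ 0, then M(v_n) ⇀ M(v) weakly in V* and lim_n ⟨M(v_n), v_n⟩ = ⟨M(v), v⟩. -/

import Mathlib

/-!
A weakly convergent sequence is bounded (uniform boundedness applied in `V*`), so the values
`M vₙ` are bounded in `V*`. Testing Brézis pseudo-monotonicity with `w = v` shows
`⟨M vₙ, vₙ - v⟩ → 0`; testing it with `w = v - u` then gives `⟨M v, u⟩ ≤ liminf ⟨M vₙ, u⟩` for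
every `u`, and applying this to `-u` as well yields `⟨M vₙ, u⟩ → ⟨M v, u⟩`. Finally
`⟨M vₙ, vₙ⟩ = ⟨M vₙ, vₙ - v⟩ + ⟨M vₙ, v⟩ → ⟨M v, v⟩`.
-/

open Filter Topology

section RealSequences

variable {ι : Type*} {l : Filter ι}

theorem liminf_add_le_of_tendsto_zero [l.NeBot] {t y : ι → ℝ} (ht : Tendsto t l (𝓝 0))
    (hy : IsBoundedUnder (· ≤ ·) l fun i => |y i|) :
    liminf (fun i => t i + y i) l ≤ liminf y l := by
  obtain ⟨hy_le, hy_ge⟩ := isBoundedUnder_le_abs.1 hy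
  calc liminf (t + y) l ≤ limsup t l + liminf y l :=
        liminf_add_le ht.isBoundedUnder_ge ht.isBoundedUnder_le hy_ge hy_le.isCoboundedUnder_ge
    _ = liminf y l := by rw [ht.limsup_eq, zero_add]

theorem tendsto_of_le_liminf_of_neg_le_liminf_neg {x : ι → ℝ} {a : ℝ}
    (hx : IsBoundedUnder (· ≤ ·) l fun i => |x i|) (h : a ≤ liminf x l)
    (hneg : -a ≤ liminf (fun i => -x i) l) : Tendsto x l (𝓝 a) := by
  obtain ⟨hx_le, hx_ge⟩ := isBoundedUnder_le_abs.1 hx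
  refine tendsto_order.2 ⟨fun b hb => eventually_lt_of_lt_liminf (hb.trans_le h) hx_ge,
    fun b hb => ?_⟩
  have hx_neg_ge : IsBoundedUnder (· ≥ ·) l fun i => -x i := isBoundedUnder_ge_neg.2 hx_le
  filter_upwards [eventually_lt_of_lt_liminf ((neg_lt_neg hb).trans_le hneg) hx_neg_ge]
    with i hi using neg_lt_neg_iff.1 hi

end RealSequences

theorem exists_norm_le_of_forall_bddAbove_norm_apply {𝕜 E ι : Type*} [RCLike 𝕜]
    [NormedAddCommGroup E] [NormedSpace 𝕜 E] {v : ι → E}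
    (h : ∀ f : StrongDual 𝕜 E, BddAbove (Set.range fun i => ‖f (v i)‖)) :
    ∃ C, ∀ i, ‖v i‖ ≤ C := by
  obtain ⟨C, hC⟩ := banach_steinhaus (g := fun i => NormedSpace.inclusionInDoubleDual 𝕜 E (v i))
    fun f => let ⟨C, hC⟩ := h f; ⟨C, Set.forall_mem_range.1 hC⟩
  exact ⟨C, fun i => (NormedSpace.inclusionInDoubleDualLi 𝕜).norm_map (v i) ▸ hC i⟩

section DualSequences

variable {V ι : Type*} [NormedAddCommGroup V] [NormedSpace ℝ V] {l : Filter ι}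
  {ℓ : ι → StrongDual ℝ V} {C : ℝ}

theorem isBoundedUnder_abs_apply (hC : ∀ i, ‖ℓ i‖ ≤ C) {u : ι → V} {R : ℝ}
    (hR : ∀ i, ‖u i‖ ≤ R) : IsBoundedUnder (· ≤ ·) l fun i => |ℓ i (u i)| :=
  isBoundedUnder_of ⟨C * R, fun i => ((ℓ i).le_opNorm (u i)).trans <|
    mul_le_mul (hC i) (hR i) (norm_nonneg _) ((norm_nonneg _).trans (hC i))⟩

theorem tendsto_apply_of_forall_le_liminf {ℓ₀ : StrongDual ℝ V} (hC : ∀ i, ‖ℓ i‖ ≤ C)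
    (h : ∀ u, ℓ₀ u ≤ liminf (fun i => ℓ i u) l) (u : V) :
    Tendsto (fun i => ℓ i u) l (𝓝 (ℓ₀ u)) :=
  tendsto_of_le_liminf_of_neg_le_liminf_neg (isBoundedUnder_abs_apply hC fun _ => le_rfl) (h u)
    (by simpa only [map_neg] using h (-u))

end DualSequences

theorem stmt_6_general {V : Type*} [NormedAddCommGroup V] [NormedSpace ℝ V]
    (M : V → StrongDual ℝ V)
    (hpm : ∀ (v : ℕ → V) (v₀ : V),
      (∀ f : StrongDual ℝ V, Tendsto (fun n => f (v n)) atTop (𝓝 (f v₀))) →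
      limsup (fun n => M (v n) (v n - v₀)) atTop ≤ 0 →
      ∀ w : V, M v₀ (v₀ - w) ≤ liminf (fun n => M (v n) (v n - w)) atTop)
    (hbdd : ∀ R : ℝ, ∃ C : ℝ, ∀ v : V, ‖v‖ ≤ R → ‖M v‖ ≤ C) :
    ∀ (v : ℕ → V) (v₀ : V),
      (∀ f : StrongDual ℝ V, Tendsto (fun n => f (v n)) atTop (𝓝 (f v₀))) →
      limsup (fun n => M (v n) (v n - v₀)) atTop ≤ 0 →
      (∀ w : V, Tendsto (fun n => M (v n) w) atTop (𝓝 (M v₀ w))) ∧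
        Tendsto (fun n => M (v n) (v n)) atTop (𝓝 (M v₀ v₀)) := by
  intro v v₀ hw hls
  obtain ⟨R, hR⟩ := exists_norm_le_of_forall_bddAbove_norm_apply fun f => (hw f).norm.bddAbove_range
  obtain ⟨C, hC⟩ := hbdd R
  have hMv : ∀ n, ‖M (v n)‖ ≤ C := fun n => hC _ (hR n)
  have hgap : Tendsto (fun n => M (v n) (v n - v₀)) atTop (𝓝 0) := by
    obtain ⟨hb_le, hb_ge⟩ := isBoundedUnder_le_abs.1 <|
      isBoundedUnder_abs_apply (l := atTop) hMv fun n => norm_sub_le_of_le (hR n) le_rfl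
    refine tendsto_of_le_liminf_of_limsup_le ?_ hls hb_le hb_ge
    simpa using hpm v v₀ hw hls v₀
  have hlower : ∀ u, M v₀ u ≤ liminf (fun n => M (v n) u) atTop := fun u => by
    have hsplit : ∀ n, v n - (v₀ - u) = (v n - v₀) + u := fun n => by abel
    have h := hpm v v₀ hw hls (v₀ - u)
    simp only [sub_sub_cancel, hsplit, map_add] at h
    exact h.trans <|
      liminf_add_le_of_tendsto_zero hgap (isBoundedUnder_abs_apply hMv fun _ => le_rfl)
  have hweak := tendsto_apply_of_forall_le_liminf hMv hlower
  refine ⟨hweak, ?_⟩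
  simpa using hgap.add (hweak v₀)

/-- On a reflexive Banach space, an operator `M : V → V*` that is pseudo-monotone in the
sense of Brézis and bounded on bounded sets is pseudo-monotone in the sense of Browder:
if `v_n ⇀ v` weakly and `limsup ⟨M(v_n), v_n - v⟩ ≤ 0`, then `M(v_n) ⇀ M(v)` weakly in `V*`
and `⟨M(v_n), v_n⟩ → ⟨M(v), v⟩`. -/
theorem stmt_6 {V : Type*} [NormedAddCommGroup V] [NormedSpace ℝ V] [CompleteSpace V]
    (hrefl : Function.Surjective (NormedSpace.inclusionInDoubleDual ℝ V))
    (M : V → StrongDual ℝ V)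
    (hpm : ∀ (v : ℕ → V) (v₀ : V),
      (∀ f : StrongDual ℝ V, Tendsto (fun n => f (v n)) atTop (𝓝 (f v₀))) →
      limsup (fun n => M (v n) (v n - v₀)) atTop ≤ 0 →
      ∀ w : V, M v₀ (v₀ - w) ≤ liminf (fun n => M (v n) (v n - w)) atTop)
    (hbdd : ∀ R : ℝ, ∃ C : ℝ, ∀ v : V, ‖v‖ ≤ R → ‖M v‖ ≤ C) :
    ∀ (v : ℕ → V) (v₀ : V),
      (∀ f : StrongDual ℝ V, Tendsto (fun n => f (v n)) atTop (𝓝 (f v₀))) →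
      limsup (fun n => M (v n) (v n - v₀)) atTop ≤ 0 →
      (∀ w : V, Tendsto (fun n => M (v n) w) atTop (𝓝 (M v₀ w))) ∧
        Tendsto (fun n => M (v n) (v n)) atTop (𝓝 (M v₀ v₀)) :=
  stmt_6_general M hpm hbdd
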